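/- Let K be a compact line and G : K → ℝ amenable. If f : K → ℝ is G-integrable on K, then for every nonempty subinterval I ⊆ K, the indicator function f_I (equal to f on I and 0 elsewhere) is G-integrable on K. -/

import Mathlib

open Set Filter MeasureTheory

/-- A tagged partition of the interval `[a,b]` in a linear order `K`. -/
structure TaggedPartition (K : Type*) [LinearOrder K] (a b : K) where
  n : ℕ
  x : ℕ → K
  t : ℕ → K
  x_zero : x 0 = a
  x_last : x n = b
  mono : ∀ i < n, x i ≤ x (i + 1)
  tag_mem : ∀ i < n, t (i + 1) ∈ Set.Icc (x i) (x (i + 1))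

/-- A gauge on the interval `[a,b]` of `K`: each point of `[a,b]` is assigned a
relatively open subinterval of `[a,b]` containing it. -/
def IsGauge (K : Type*) [LinearOrder K] [TopologicalSpace K] (a b : K) (δ : K → Set K) : Prop :=
  ∀ x ∈ Set.Icc a b, x ∈ δ x ∧ (δ x).OrdConnected ∧ ∃ U, IsOpen U ∧ δ x = U ∩ Set.Icc a b

/-- A tagged partition is `δ`-fine when `(x_{i-1}, x_i] ⊆ δ(t_i)` for all `i`. -/
def TaggedPartition.IsFine {K : Type*} [LinearOrder K] {a b : K}
    (P : TaggedPartition K a b) (δ : K → Set K) : Prop :=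
  ∀ i < P.n, Set.Ioc (P.x i) (P.x (i + 1)) ⊆ δ (P.t (i + 1))

/-- The Riemann sum `S(f,G,P) = f(a)G(a) + Σ f(t_i)(G(x_i) - G(x_{i-1}))`. -/
noncomputable def riemannSum {K : Type*} [LinearOrder K] {a b : K}
    (f G : K → ℝ) (P : TaggedPartition K a b) : ℝ :=
  f a * G a + ∑ i ∈ Finset.range P.n, f (P.t (i + 1)) * (G (P.x (i + 1)) - G (P.x i))

/-- `f` has Kurzweil–Stieltjes integral `A` with respect to `G` over `[a,b]`. -/
def HasIntegral {K : Type*} [LinearOrder K] [TopologicalSpace K]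
    (f G : K → ℝ) (a b : K) (A : ℝ) : Prop :=
  ∀ ε : ℝ, 0 < ε → ∃ δ : K → Set K, IsGauge K a b δ ∧
    ∀ P : TaggedPartition K a b, P.IsFine δ → |riemannSum f G P - A| < ε

/-- `G` is amenable: right-continuous everywhere, and regulated (left limits exist at
left-dense points, right limits at right-dense points). -/
def Amenable {K : Type*} [LinearOrder K] [TopologicalSpace K] [BoundedOrder K]
    (G : K → ℝ) : Prop :=
  (∀ x : K, ContinuousWithinAt G (Set.Ici x) x) ∧
  (∀ x : K, x ≠ ⊥ → (¬ ∃ y, y ⋖ x) → ∃ l, Filter.Tendsto G (nhdsWithin x (Set.Iio x)) (nhds l)) ∧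
  (∀ x : K, x ≠ ⊤ → (¬ ∃ y, x ⋖ y) → ∃ l, Filter.Tendsto G (nhdsWithin x (Set.Ioi x)) (nhds l))

open Classical in
/-- `L_G(x)`: `0` at the least element, `G` of the immediate predecessor if `x` is
left-isolated, and the left limit of `G` at `x` if `x` is left-dense. -/
noncomputable def Lfun {K : Type*} [LinearOrder K] [TopologicalSpace K] [BoundedOrder K]
    (G : K → ℝ) (x : K) : ℝ :=
  if x = ⊥ then 0
  else if h : ∃ y, y ⋖ x then G h.choose
  else Function.leftLim G x

/-- The set of variation sums of `G` over divisions of `[a,b]`. -/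
def varSums {K : Type*} [LinearOrder K] (G : K → ℝ) (a b : K) : Set ℝ :=
  {v | ∃ (n : ℕ) (x : ℕ → K), x 0 = a ∧ x n = b ∧ (∀ i < n, x i ≤ x (i + 1)) ∧
        v = ∑ i ∈ Finset.range n, |G (x (i + 1)) - G (x i)|}

/-- `S` is null for the outer measure induced by `μ` via covers by countably many
open intervals. -/
def GNull {K : Type*} [LinearOrder K] [TopologicalSpace K] [MeasurableSpace K]
    (μ : MeasureTheory.Measure K) (S : Set K) : Prop :=
  ∀ ε : ℝ, 0 < ε → ∃ I : ℕ → Set K, (∀ n, IsOpen (I n) ∧ (I n).OrdConnected) ∧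
    S ⊆ ⋃ n, I n ∧ ∑' n, μ (I n) < ENNReal.ofReal ε


/-!
Let `L` and `U` be the lower and upper closures of `I`. Then `I = L \ (L \ U)` and both `L` and
`L \ U` are lower sets; in a compact line every lower set is `Iic d` or `Iio d`. So it suffices to
integrate the indicators of `f` on `Iic u` and on `Iio u`, which we do with the Cauchy criterion
(Riemann sums converge along the filter of fine partitions, which is proper by Cousin's lemma).

Refine a gauge so that it separates the two sides of `u`. The cell of a fine partition containing
`u` is then tagged by `u`, and cutting the partition there turns a Riemann sum of the indicator
into a Riemann sum of `f` over a fine partition of `[⊥, u]`, up to `f u * (G y - G u)` with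
`u ≤ y` close to `u` (for `Iic u`) or `f u * (G u - G v)` with `v < u` close to `u` (for `Iio u`).
Right continuity of `G`, resp. its left limit at `u`, controls that error. Finally, Riemann sums of
`f` over fine partitions of `[⊥, u]` are Cauchy, since all of them can be completed by one and the
same fine partition of `[u, ⊤]`.
-/
open Topology

namespace TaggedPartition

section LinearOrder

variable {K : Type*} [LinearOrder K] {a b c : K}

def single (a : K) : TaggedPartition K a a where
  n := 0
  x _ := a
  t _ := a
  x_zero := rfl
  x_last := rfl
  mono _ h := absurd h (Nat.not_lt_zero _)
  tag_mem _ h := absurd h (Nat.not_lt_zero _)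

def snoc (P : TaggedPartition K a b) (c τ : K) (hbτ : b ≤ τ) (hτc : τ ≤ c) :
    TaggedPartition K a c where
  n := P.n + 1
  x i := if i ≤ P.n then P.x i else c
  t i := if i ≤ P.n then P.t i else τ
  x_zero := by simp [P.x_zero]
  x_last := by simp
  mono i hi := by
    rcases Nat.lt_or_ge i P.n with h | h
    · simpa [h.le, Nat.succ_le_of_lt h] using P.mono i h
    · obtain rfl : i = P.n := by omega
      simpa [P.x_last] using hbτ.trans hτc
  tag_mem i hi := by
    rcases Nat.lt_or_ge i P.n with h | h
    · simpa [h.le, Nat.succ_le_of_lt h] using P.tag_mem i h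
    · obtain rfl : i = P.n := by omega
      simpa [P.x_last] using ⟨hbτ, hτc⟩

def take (P : TaggedPartition K a b) (k : ℕ) (hk : k ≤ P.n) : TaggedPartition K a (P.x k) where
  n := k
  x := P.x
  t := P.t
  x_zero := P.x_zero
  x_last := rfl
  mono i hi := P.mono i (hi.trans_le hk)
  tag_mem i hi := P.tag_mem i (hi.trans_le hk)

def append (P : TaggedPartition K a b) (Q : TaggedPartition K b c) : TaggedPartition K a c where
  n := P.n + Q.n
  x i := if i ≤ P.n then P.x i else Q.x (i - P.n)
  t i := if i ≤ P.n then P.t i else Q.t (i - P.n)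
  x_zero := by simp [P.x_zero]
  x_last := by
    rcases Nat.eq_zero_or_pos Q.n with h | h
    · simp [h, P.x_last, ← Q.x_last, Q.x_zero]
    · simp [Nat.not_le.2 (Nat.lt_add_of_pos_right h), Q.x_last]
  mono i hi := by
    rcases Nat.lt_or_ge i P.n with h | h
    · simpa [h.le, Nat.succ_le_of_lt h] using P.mono i h
    · obtain ⟨j, rfl⟩ := Nat.exists_eq_add_of_le h
      rcases j with _ | j
      · simpa [P.x_last, ← Q.x_zero] using Q.mono 0 (by omega)
      · simpa [Nat.add_assoc] using Q.mono (j + 1) (by omega)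
  tag_mem i hi := by
    rcases Nat.lt_or_ge i P.n with h | h
    · simpa [h.le, Nat.succ_le_of_lt h] using P.tag_mem i h
    · obtain ⟨j, rfl⟩ := Nat.exists_eq_add_of_le h
      rcases j with _ | j
      · simpa [P.x_last, ← Q.x_zero] using Q.tag_mem 0 (by omega)
      · simpa [Nat.add_assoc] using Q.tag_mem (j + 1) (by omega)

variable {P : TaggedPartition K a b} {Q : TaggedPartition K b c} {i j : ℕ}

lemma append_x_of_le (hi : i ≤ P.n) : (P.append Q).x i = P.x i := if_pos hi

lemma append_t_of_le (hi : i ≤ P.n) : (P.append Q).t i = P.t i := if_pos hi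

lemma append_x_add (j : ℕ) : (P.append Q).x (P.n + j) = Q.x j := by
  rcases j with _ | j
  · simp [append_x_of_le, P.x_last, Q.x_zero]
  · exact (if_neg (by omega)).trans (by simp)

lemma append_t_add_succ (j : ℕ) : (P.append Q).t (P.n + (j + 1)) = Q.t (j + 1) :=
  (if_neg (by omega)).trans (by simp)

lemma x_mono (P : TaggedPartition K a b) (hij : i ≤ j) (hj : j ≤ P.n) : P.x i ≤ P.x j := by
  induction j, hij using Nat.le_induction with
  | base => exact le_rfl
  | succ j hij ih => exact (ih (by omega)).trans (P.mono j (by omega))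

lemma x_le_t (P : TaggedPartition K a b) (hi : i < P.n) : P.x i ≤ P.t (i + 1) :=
  (P.tag_mem i hi).1

lemma t_le_x (P : TaggedPartition K a b) (hi : i < P.n) : P.t (i + 1) ≤ P.x (i + 1) :=
  (P.tag_mem i hi).2

lemma t_mono (P : TaggedPartition K a b) (hij : i ≤ j) (hj : j < P.n) :
    P.t (i + 1) ≤ P.t (j + 1) := by
  rcases hij.eq_or_lt with rfl | hij
  · exact le_rfl
  · exact (P.t_le_x (hij.trans hj)).trans ((P.x_mono hij hj.le).trans (P.x_le_t hj))

lemma exists_t_mem_iff_lt (P : TaggedPartition K a b) {L : Set K} (hL : IsLowerSet L) :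
    ∃ j ≤ P.n, ∀ i < P.n, P.t (i + 1) ∈ L ↔ i < j := by
  classical
  have hex : ∃ m, ∀ i < P.n, m ≤ i → P.t (i + 1) ∉ L := ⟨P.n, fun i hi h => by omega⟩
  refine ⟨Nat.find hex, Nat.find_le fun i hi h => by omega,
    fun i hi => ⟨fun hiL => ?_, fun hij => ?_⟩⟩
  · by_contra! h
    exact Nat.find_spec hex i hi h hiL
  · obtain ⟨k, hk, hik, hkL⟩ : ∃ k < P.n, i ≤ k ∧ P.t (k + 1) ∈ L := by
      simpa using Nat.find_min hex hij
    exact hL (P.t_mono hik hk) hkL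

variable {δ : K → Set K}

lemma isFine_single (a : K) (δ : K → Set K) : (single a).IsFine δ :=
  fun _ h => absurd h (Nat.not_lt_zero _)

lemma IsFine.mono {δ' : K → Set K} (hP : P.IsFine δ) (h : ∀ x, δ x ⊆ δ' x) : P.IsFine δ' :=
  fun i hi => (hP i hi).trans (h _)

lemma IsFine.snoc {τ : K} (hP : P.IsFine δ) (hbτ : b ≤ τ) (hτc : τ ≤ c) (hcell : Ioc b c ⊆ δ τ) :
    (P.snoc c τ hbτ hτc).IsFine δ := by
  intro i hi
  rcases Nat.lt_or_ge i P.n with h | h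
  · simpa [TaggedPartition.snoc, h.le, Nat.succ_le_of_lt h] using hP i h
  · obtain rfl : i = P.n := by simp only [TaggedPartition.snoc] at hi; omega
    simpa [TaggedPartition.snoc, P.x_last] using hcell

lemma IsFine.take (hP : P.IsFine δ) (k : ℕ) (hk : k ≤ P.n) : (P.take k hk).IsFine δ :=
  fun i hi => hP i (hi.trans_le hk)

lemma IsFine.append (hP : P.IsFine δ) (hQ : Q.IsFine δ) : (P.append Q).IsFine δ := by
  intro i hi
  rcases Nat.lt_or_ge i P.n with h | h
  · rw [append_x_of_le h.le, append_x_of_le h, append_t_of_le h]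
    exact hP i h
  · obtain ⟨j, rfl⟩ := Nat.exists_eq_add_of_le h
    rw [add_assoc, append_x_add, append_x_add, append_t_add_succ]
    exact hQ j (by simp only [TaggedPartition.append] at hi; omega)

end LinearOrder

end TaggedPartition

section RiemannSum

open TaggedPartition

variable {K : Type*} [LinearOrder K] {a b c : K} {f g G : K → ℝ}

lemma riemannSum_snoc (P : TaggedPartition K a b) {τ : K} (hbτ : b ≤ τ) (hτc : τ ≤ c) :
    riemannSum f G (P.snoc c τ hbτ hτc) = riemannSum f G P + f τ * (G c - G b) := by
  simp only [riemannSum, snoc, Finset.sum_range_succ, le_rfl, if_true,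
    show ¬ P.n + 1 ≤ P.n by omega, if_false, P.x_last, add_assoc]
  congr 2
  refine Finset.sum_congr rfl fun i hi => ?_
  have hi : i + 1 ≤ P.n := Finset.mem_range.1 hi
  simp [hi, hi.trans' i.le_succ]

lemma riemannSum_take_succ (P : TaggedPartition K a b) {k : ℕ} (hk : k + 1 ≤ P.n) :
    riemannSum f G (P.take (k + 1) hk) =
      riemannSum f G (P.take k (by omega)) + f (P.t (k + 1)) * (G (P.x (k + 1)) - G (P.x k)) := by
  simp only [riemannSum, take, Finset.sum_range_succ, add_assoc]

lemma riemannSum_append (P : TaggedPartition K a b) (Q : TaggedPartition K b c) :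
    riemannSum f G (P.append Q) = riemannSum f G P + riemannSum f G Q - f b * G b := by
  have hP : ∀ i ∈ Finset.range P.n, f ((P.append Q).t (i + 1)) *
      (G ((P.append Q).x (i + 1)) - G ((P.append Q).x i)) =
        f (P.t (i + 1)) * (G (P.x (i + 1)) - G (P.x i)) := fun i hi => by
    have hi := Finset.mem_range.1 hi
    rw [append_x_of_le hi.le, append_x_of_le hi, append_t_of_le hi]
  have hQ : ∀ j ∈ Finset.range Q.n, f ((P.append Q).t (P.n + j + 1)) *
      (G ((P.append Q).x (P.n + j + 1)) - G ((P.append Q).x (P.n + j))) =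
        f (Q.t (j + 1)) * (G (Q.x (j + 1)) - G (Q.x j)) := fun j _ => by
    rw [add_assoc, append_x_add, append_x_add, append_t_add_succ]
  simp only [riemannSum, append, Finset.sum_range_add] at hP hQ ⊢
  rw [Finset.sum_congr rfl hP, Finset.sum_congr rfl hQ]
  ring

lemma riemannSum_indicator_eq_take (P : TaggedPartition K a b) {s : Set K} (ha : a ∈ s) {j : ℕ}
    (hj : j ≤ P.n) (hs : ∀ i < P.n, P.t (i + 1) ∈ s ↔ i < j) :
    riemannSum (s.indicator f) G P = riemannSum f G (P.take j hj) := by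
  obtain ⟨m, hm⟩ := Nat.exists_eq_add_of_le hj
  simp only [riemannSum, take, indicator_of_mem ha, hm, Finset.sum_range_add]
  rw [Finset.sum_eq_zero (s := Finset.range m) fun i hi => ?_, add_zero]
  · congr 1
    refine Finset.sum_congr rfl fun i hi => ?_
    have hi := Finset.mem_range.1 hi
    rw [indicator_of_mem ((hs i (by omega)).2 hi)]
  · have hi := Finset.mem_range.1 hi
    rw [indicator_of_notMem fun h => by simpa using (hs (j + i) (by omega)).1 h, zero_mul]

lemma riemannSum_sub (P : TaggedPartition K a b) :
    riemannSum (f - g) G P = riemannSum f G P - riemannSum g G P := by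
  simp only [riemannSum, Pi.sub_apply, sub_mul, Finset.sum_sub_distrib]
  ring

end RiemannSum

section Gauge

variable {K : Type*} [LinearOrder K] [TopologicalSpace K] {a b : K} {δ δ' : K → Set K}

lemma IsGauge.inter (hδ : IsGauge K a b δ) (hδ' : IsGauge K a b δ') :
    IsGauge K a b fun x => δ x ∩ δ' x := by
  intro x hx
  obtain ⟨hxδ, hδc, U, hU, hUeq⟩ := hδ x hx
  obtain ⟨hxδ', hδc', U', hU', hU'eq⟩ := hδ' x hx
  refine ⟨⟨hxδ, hxδ'⟩, hδc.inter hδc', U ∩ U', hU.inter hU', ?_⟩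
  change δ x ∩ δ' x = _
  rw [hUeq, hU'eq, ← inter_inter_distrib_right]

lemma isGauge_Icc (a b : K) : IsGauge K a b fun _ => Icc a b :=
  fun _ hx => ⟨hx, ordConnected_Icc, univ, isOpen_univ, (univ_inter _).symm⟩

variable (a b) in
def fineFilter : Filter (TaggedPartition K a b) :=
  ⨅ (δ) (_ : IsGauge K a b δ), 𝓟 {P | P.IsFine δ}

lemma hasBasis_fineFilter :
    (fineFilter a b).HasBasis (IsGauge K a b) fun δ => {P | P.IsFine δ} :=
  hasBasis_biInf_principal'
    (fun _ hδ _ hδ' => ⟨_, hδ.inter hδ',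
      fun _ (hP : TaggedPartition.IsFine _ _) => hP.mono fun _ => inter_subset_left,
      fun _ (hP : TaggedPartition.IsFine _ _) => hP.mono fun _ => inter_subset_right⟩)
    ⟨_, isGauge_Icc a b⟩

lemma hasIntegral_iff_tendsto {f G : K → ℝ} {A : ℝ} :
    HasIntegral f G a b A ↔ Tendsto (riemannSum f G) (fineFilter a b) (𝓝 A) := by
  simp [hasBasis_fineFilter.tendsto_iff Metric.nhds_basis_ball, HasIntegral, Real.dist_eq]

lemma HasIntegral.sub {f g G : K → ℝ} {A B : ℝ} (hf : HasIntegral f G a b A)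
    (hg : HasIntegral g G a b B) : HasIntegral (f - g) G a b (A - B) := by
  rw [hasIntegral_iff_tendsto] at *
  simpa only [← riemannSum_sub] using hf.sub hg

lemma hasIntegral_zero (G : K → ℝ) : HasIntegral 0 G a b 0 := by
  rw [hasIntegral_iff_tendsto]
  exact tendsto_const_nhds.congr fun P => by simp [riemannSum]

lemma isGauge_bot_top_iff [BoundedOrder K] :
    IsGauge K ⊥ ⊤ δ ↔ ∀ x, x ∈ δ x ∧ (δ x).OrdConnected ∧ IsOpen (δ x) := by
  simp only [IsGauge, Icc_bot_top, inter_univ, mem_univ, true_implies, exists_eq_right']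

lemma IsGauge.mem_nhds [BoundedOrder K] (hδ : IsGauge K ⊥ ⊤ δ) (x : K) : δ x ∈ 𝓝 x :=
  (isGauge_bot_top_iff.1 hδ x).2.2.mem_nhds (isGauge_bot_top_iff.1 hδ x).1

end Gauge

section Separation

variable {K : Type*} [LinearOrder K] {δ : K → Set K} {u : K}

def SeparatesAt (δ : K → Set K) (u : K) : Prop :=
  (∀ t < u, δ t ⊆ Iio u) ∧ ∀ t, u < t → δ t ⊆ Ioi u

namespace SeparatesAt

variable {a b : K} {P : TaggedPartition K a b} {i : ℕ}

lemma t_eq (hδ : SeparatesAt δ u) (hP : P.IsFine δ) (hi : i < P.n) (h₁ : P.x i < u)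
    (h₂ : u ≤ P.x (i + 1)) : P.t (i + 1) = u := by
  have hu : u ∈ δ (P.t (i + 1)) := hP i hi ⟨h₁, h₂⟩
  rcases lt_trichotomy (P.t (i + 1)) u with h | h | h
  · exact absurd (hδ.1 _ h hu) (lt_irrefl u)
  · exact h
  · exact absurd (hδ.2 _ h hu) (lt_irrefl u)

variable [BoundedOrder K] {f G : K → ℝ}

lemma exists_riemannSum_indicator_Iic (hδ : SeparatesAt δ u) (hu : u ∈ δ u)
    {P : TaggedPartition K ⊥ ⊤} (hP : P.IsFine δ) :
    ∃ P' : TaggedPartition K ⊥ u, P'.IsFine δ ∧ ∃ y ∈ δ u, u ≤ y ∧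
      riemannSum ((Iic u).indicator f) G P = riemannSum f G P' + f u * (G y - G u) := by
  obtain ⟨j, hjn, hj⟩ := P.exists_t_mem_iff_lt (isLowerSet_Iic u)
  rw [riemannSum_indicator_eq_take P (mem_Iic.2 bot_le) hjn hj]
  have hxj : u ≤ P.x j := by
    by_contra! hxj
    have hjn' : j < P.n := hjn.lt_of_ne fun h => by simp [h, P.x_last] at hxj
    have htj : u < P.t (j + 1) := not_le.1 fun h => lt_irrefl j ((hj j hjn').1 h)
    exact htj.ne' (hδ.t_eq hP hjn' hxj (htj.le.trans (P.t_le_x hjn')))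
  rcases j with _ | j
  · obtain rfl : u = ⊥ := le_bot_iff.1 (P.x_zero ▸ hxj)
    exact ⟨.single ⊥, TaggedPartition.isFine_single ⊥ δ, ⊥, hu, le_rfl,
      by simp [riemannSum, TaggedPartition.take, TaggedPartition.single]⟩
  have htj : P.t (j + 1) = u := by
    refine le_antisymm ((hj j (by omega)).2 j.lt_succ_self) ?_
    by_cases h : P.x j < u
    · exact (hδ.t_eq hP hjn h hxj).ge
    · exact (not_lt.1 h).trans (P.x_le_t hjn)
  have hcell : Ioc (P.x j) (P.x (j + 1)) ⊆ δ u := htj ▸ hP j hjn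
  refine ⟨(P.take j (by omega)).snoc u u (htj ▸ P.x_le_t hjn) le_rfl,
    (hP.take j _).snoc _ _ ((Ioc_subset_Ioc_right hxj).trans hcell), P.x (j + 1), ?_, hxj, ?_⟩
  · rcases (P.mono j hjn).eq_or_lt with h | h
    · rw [le_antisymm (h ▸ htj ▸ P.x_le_t hjn) hxj]
      exact hu
    · exact hcell ⟨h, le_rfl⟩
  · rw [riemannSum_take_succ, riemannSum_snoc, htj]
    ring

lemma exists_riemannSum_indicator_Iio (hδ : SeparatesAt δ u) (hu : u ≠ ⊥)
    {P : TaggedPartition K ⊥ ⊤} (hP : P.IsFine δ) :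
    ∃ P' : TaggedPartition K ⊥ u, P'.IsFine δ ∧ ∃ v < u, Ioc v u ⊆ δ u ∧
      riemannSum ((Iio u).indicator f) G P = riemannSum f G P' - f u * (G u - G v) := by
  obtain ⟨j, hjn, hj⟩ := P.exists_t_mem_iff_lt (isLowerSet_Iio u)
  rw [riemannSum_indicator_eq_take P (mem_Iio.2 (bot_lt_iff_ne_bot.2 hu)) hjn hj]
  have hxj : P.x j < u := by
    by_contra! hxj
    rcases j with _ | j
    · exact hu (le_bot_iff.1 (P.x_zero ▸ hxj))
    have htj : P.t (j + 1) < u := (hj j (by omega)).2 j.lt_succ_self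
    by_cases h : P.x j < u
    · exact htj.ne (hδ.t_eq hP (by omega) h hxj)
    · exact h ((P.x_le_t (by omega)).trans_lt htj)
  have hjn' : j < P.n := hjn.lt_of_ne fun h => by simp [h, P.x_last] at hxj
  have htj : u ≤ P.t (j + 1) := not_lt.1 fun h => lt_irrefl j ((hj j hjn').1 h)
  have htj : P.t (j + 1) = u := hδ.t_eq hP hjn' hxj (htj.trans (P.t_le_x hjn'))
  have hcell : Ioc (P.x j) u ⊆ δ u :=
    htj ▸ (Ioc_subset_Ioc_right (htj ▸ P.t_le_x hjn')).trans (hP j hjn')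
  refine ⟨(P.take j hjn).snoc u u hxj.le le_rfl, (hP.take j hjn).snoc _ _ hcell, P.x j, hxj,
    hcell, ?_⟩
  rw [riemannSum_snoc]
  ring

end SeparatesAt

end Separation

section Compact

variable {K : Type*} [LinearOrder K] [TopologicalSpace K] [OrderTopology K] [CompactSpace K]
  [BoundedOrder K]

lemma exists_isLUB (s : Set K) : ∃ d, IsLUB s d := by
  have hclosed : IsClosed (upperBounds s) := by
    rw [show upperBounds s = ⋂ x ∈ s, Ici x by ext; simp [upperBounds]]
    exact isClosed_biInter fun _ _ => isClosed_Ici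
  exact hclosed.isCompact.exists_isLeast ⟨⊤, fun _ _ => le_top⟩

lemma IsLowerSet.exists_eq_Iic_or_eq_Iio {L : Set K} (hL : IsLowerSet L) :
    ∃ d, L = Iic d ∨ L = Iio d := by
  obtain ⟨d, hd⟩ := exists_isLUB L
  by_cases hdL : d ∈ L
  · exact ⟨d, .inl (subset_antisymm (fun _ hx => hd.1 hx) fun _ hx => hL hx hdL)⟩
  · refine ⟨d, .inr (subset_antisymm (fun x hx => (hd.1 hx).lt_of_ne ?_) fun x hx => ?_)⟩
    · rintro rfl
      exact hdL hx
    · obtain ⟨l, hl, hxl, -⟩ := hd.exists_between hx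
      exact hL hxl.le hl

theorem exists_isFine_of_mem_nhds (a : K) {δ : K → Set K} (hδ : ∀ x, δ x ∈ 𝓝 x) :
    ∃ P : TaggedPartition K a ⊤, P.IsFine δ := by
  set S := {y | ∃ P : TaggedPartition K a y, P.IsFine δ}
  have hsnoc : ∀ s ∈ S, ∀ y τ, s ≤ τ → τ ≤ y → Ioc s y ⊆ δ τ → y ∈ S :=
    fun s ⟨P, hP⟩ y τ hsτ hτy hcell => ⟨P.snoc y τ hsτ hτy, hP.snoc hsτ hτy hcell⟩
  have haS : a ∈ S := ⟨.single a, TaggedPartition.isFine_single a δ⟩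
  obtain ⟨c, hc⟩ := exists_isLUB S
  have hcS : c ∈ S := by
    rcases eq_or_ne c ⊥ with hc' | hc'
    · exact le_antisymm (hc.1 haS) (hc' ▸ bot_le) ▸ haS
    obtain ⟨y, hyc, hy⟩ := exists_Ioc_subset_of_mem_nhds (hδ c) ⟨⊥, bot_lt_iff_ne_bot.2 hc'⟩
    obtain ⟨s, hs, hys, hsc⟩ := hc.exists_between hyc
    exact hsnoc s hs c c hsc le_rfl ((Ioc_subset_Ioc_left hys.le).trans hy)
  suffices c = ⊤ from this ▸ hcS
  by_contra hct
  obtain ⟨z, hcz, hz⟩ := exists_Ico_subset_of_mem_nhds (hδ c) ⟨⊤, lt_top_iff_ne_top.2 hct⟩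
  obtain ⟨w, hcw, hwS⟩ : ∃ w, c < w ∧ w ∈ S := by
    by_cases hcov : c ⋖ z
    · refine ⟨z, hcz, hsnoc c hcS z z hcz.le le_rfl fun x hx => ?_⟩
      rw [le_antisymm hx.2 (not_lt.1 fun h => hcov.2 hx.1 h)]
      exact mem_of_mem_nhds (hδ z)
    · obtain ⟨w, hcw, hwz⟩ := not_covBy_iff hcz |>.1 hcov
      exact ⟨w, hcw, hsnoc c hcS w c le_rfl hcw.le fun x hx => hz ⟨hx.1.le, hx.2.trans_lt hwz⟩⟩
  exact (hc.1 hwS).not_gt hcw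

instance : (fineFilter (⊥ : K) ⊤).NeBot :=
  hasBasis_fineFilter.neBot_iff.2 fun hδ => exists_isFine_of_mem_nhds ⊥ hδ.mem_nhds

variable {f g G : K → ℝ} {A : ℝ}

theorem exists_hasIntegral_of_cauchy
    (h : ∀ ε > 0, ∃ δ, IsGauge K ⊥ ⊤ δ ∧ ∀ P Q : TaggedPartition K ⊥ ⊤, P.IsFine δ → Q.IsFine δ →
      |riemannSum f G P - riemannSum f G Q| < ε) :
    ∃ A, HasIntegral f G ⊥ ⊤ A := by
  simp_rw [hasIntegral_iff_tendsto]
  refine cauchy_map_iff_exists_tendsto.1 (Metric.cauchy_iff.2 ⟨inferInstance, fun ε hε => ?_⟩)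
  obtain ⟨δ, hδ, hPQ⟩ := h ε hε
  refine ⟨_, image_mem_map (hasBasis_fineFilter.mem_of_mem hδ), ?_⟩
  rintro _ ⟨P, hP, rfl⟩ _ ⟨Q, hQ, rfl⟩
  exact hPQ P Q hP hQ

lemma HasIntegral.cauchy_Iic (hf : HasIntegral f G ⊥ ⊤ A) (u : K) {ε : ℝ} (hε : 0 < ε) :
    ∃ δ, IsGauge K ⊥ ⊤ δ ∧ ∀ P Q : TaggedPartition K ⊥ u, P.IsFine δ → Q.IsFine δ →
      |riemannSum f G P - riemannSum f G Q| < ε := by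
  obtain ⟨δ, hδ, hA⟩ := hf (ε / 2) (half_pos hε)
  obtain ⟨R, hR⟩ := exists_isFine_of_mem_nhds u hδ.mem_nhds
  refine ⟨δ, hδ, fun P Q hP hQ => ?_⟩
  have hPR := hA _ (hP.append hR)
  have hQR := hA _ (hQ.append hR)
  rw [riemannSum_append] at hPR hQR
  calc |riemannSum f G P - riemannSum f G Q|
      = |(riemannSum f G P + riemannSum f G R - f u * G u - A) -
          (riemannSum f G Q + riemannSum f G R - f u * G u - A)| := by ring_nf
    _ ≤ _ := abs_sub _ _
    _ < ε / 2 + ε / 2 := add_lt_add hPR hQR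
    _ = ε := add_halves ε

theorem exists_hasIntegral_of_approx (hf : HasIntegral f G ⊥ ⊤ A) (u : K) (c : ℝ)
    (h : ∀ ε > 0, ∀ δ₀, IsGauge K ⊥ ⊤ δ₀ → ∃ δ, IsGauge K ⊥ ⊤ δ ∧
      ∀ P : TaggedPartition K ⊥ ⊤, P.IsFine δ → ∃ P' : TaggedPartition K ⊥ u,
        P'.IsFine δ₀ ∧ |riemannSum g G P - (riemannSum f G P' + c)| < ε) :
    ∃ B, HasIntegral g G ⊥ ⊤ B := by
  refine exists_hasIntegral_of_cauchy fun ε hε => ?_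
  obtain ⟨δ₀, hδ₀, hf'⟩ := hf.cauchy_Iic u (half_pos hε)
  obtain ⟨δ, hδ, happrox⟩ := h (ε / 4) (by positivity) δ₀ hδ₀
  refine ⟨δ, hδ, fun P Q hP hQ => ?_⟩
  obtain ⟨P', hP', hPP'⟩ := happrox P hP
  obtain ⟨Q', hQ', hQQ'⟩ := happrox Q hQ
  have := hf' P' Q' hP' hQ'
  calc |riemannSum g G P - riemannSum g G Q|
      = |(riemannSum g G P - (riemannSum f G P' + c)) + (riemannSum f G P' - riemannSum f G Q')
          - (riemannSum g G Q - (riemannSum f G Q' + c))| := by ring_nf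
    _ ≤ _ := (abs_sub _ _).trans (add_le_add_left (abs_add_le _ _) _)
    _ < ε / 4 + ε / 2 + ε / 4 := by gcongr
    _ = ε := by ring

end Compact

section Amenable

variable {K : Type*} [LinearOrder K] [TopologicalSpace K] [OrderTopology K]

lemma isOpen_ordConnectedComponent {U : Set K} (hU : IsOpen U) (x : K) :
    IsOpen (ordConnectedComponent U x) :=
  isOpen_iff_mem_nhds.2 fun y hy => by
    rw [ordConnectedComponent_eq (mem_ordConnectedComponent.1 hy)]
    exact ordConnectedComponent_mem_nhds.2 (hU.mem_nhds (ordConnectedComponent_subset hy))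

variable [BoundedOrder K] {G : K → ℝ} {u : K}

lemma exists_separatesAt {δ₀ : K → Set K} (hδ₀ : IsGauge K ⊥ ⊤ δ₀) {O : Set K} (hO : O ∈ 𝓝 u) :
    ∃ δ, IsGauge K ⊥ ⊤ δ ∧ (∀ x, δ x ⊆ δ₀ x) ∧ δ u ⊆ O ∧ SeparatesAt δ u := by
  set V := ordConnectedComponent (interior O) u
  set W : K → Set K := fun x => if x < u then Iio u else if u < x then Ioi u else V
  have hW : ∀ x, x ∈ W x ∧ (W x).OrdConnected ∧ IsOpen (W x) := fun x => by
    simp only [W]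
    split_ifs with h₁ h₂
    · exact ⟨h₁, ordConnected_Iio, isOpen_Iio⟩
    · exact ⟨h₂, ordConnected_Ioi, isOpen_Ioi⟩
    · obtain rfl : x = u := le_antisymm (not_lt.1 h₂) (not_lt.1 h₁)
      exact ⟨self_mem_ordConnectedComponent.2 (mem_interior_iff_mem_nhds.2 hO), inferInstance,
        isOpen_ordConnectedComponent isOpen_interior x⟩
  have hδ₀' := isGauge_bot_top_iff.1 hδ₀
  refine ⟨fun x => δ₀ x ∩ W x, isGauge_bot_top_iff.2 fun x => ⟨⟨(hδ₀' x).1, (hW x).1⟩,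
    (hδ₀' x).2.1.inter (hW x).2.1, (hδ₀' x).2.2.inter (hW x).2.2⟩, fun x => inter_subset_left,
    ?_, fun x hx => ?_, fun x hx => ?_⟩
  · refine inter_subset_right.trans ?_
    simpa [W] using ordConnectedComponent_subset.trans interior_subset
  · simp [W, hx]
  · simp [W, hx, hx.not_gt]

/-- `L` is `G` of the predecessor of `u` if there is one, and the left limit of `G` at `u`
otherwise. -/
lemma Amenable.exists_leftLimit (hG : Amenable G) (hu : u ≠ ⊥) :
    ∃ L, ∀ ε > 0, ∃ O ∈ 𝓝 u, ∀ v < u, Ioc v u ⊆ O → |G v - L| < ε := by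
  by_cases hpred : ∃ p, p ⋖ u
  · obtain ⟨p, hp⟩ := hpred
    refine ⟨G p, fun ε hε => ⟨Ioi p, isOpen_Ioi.mem_nhds hp.lt, fun v hvu hv => ?_⟩⟩
    have hpv : p ≤ v := not_lt.1 fun hvp => lt_irrefl p (hv ⟨hvp, hp.le⟩)
    rwa [le_antisymm (not_lt.1 fun h => hp.2 h hvu) hpv, sub_self, abs_zero]
  obtain ⟨L, hL⟩ := hG.2.1 u hu hpred
  refine ⟨L, fun ε hε => ?_⟩
  obtain ⟨w, hwu, hw⟩ := (mem_nhdsLT_iff_exists_Ioo_subset' (bot_lt_iff_ne_bot.2 hu)).1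
    (hL (Metric.ball_mem_nhds L hε))
  obtain ⟨w', hww', hw'u⟩ : ∃ w', w < w' ∧ w' < u := by
    by_contra! h
    exact hpred ⟨w, hwu, fun z hwz hzu => (h z hwz).not_gt hzu⟩
  refine ⟨Ioi w', isOpen_Ioi.mem_nhds hw'u, fun v hvu hv => ?_⟩
  have hw'v : w' ≤ v := not_lt.1 fun hvw' => lt_irrefl w' (hv ⟨hvw', hw'u.le⟩)
  simpa [Real.dist_eq] using hw ⟨hww'.trans_le hw'v, hvu⟩

end Amenable

lemma abs_mul_lt_of_abs_lt_div {a x ε : ℝ} (h : |x| < ε / (|a| + 1)) : |a * x| < ε := by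
  rw [lt_div_iff₀ (by positivity)] at h
  rw [abs_mul]
  nlinarith [abs_nonneg a, abs_nonneg x]

section Indicator

variable {K : Type*} [LinearOrder K] [TopologicalSpace K] [OrderTopology K] [CompactSpace K]
  [BoundedOrder K] {f G : K → ℝ} {A : ℝ}

theorem exists_hasIntegral_indicator_Iic {u : K} (hGu : ContinuousWithinAt G (Ici u) u)
    (hf : HasIntegral f G ⊥ ⊤ A) : ∃ B, HasIntegral ((Iic u).indicator f) G ⊥ ⊤ B := by
  refine exists_hasIntegral_of_approx hf u 0 fun ε hε δ₀ hδ₀ => ?_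
  obtain ⟨O, hO, hGO⟩ := mem_nhdsWithin_iff_exists_mem_nhds_inter.1
    (hGu (Metric.ball_mem_nhds (G u) (by positivity : 0 < ε / (|f u| + 1))))
  obtain ⟨δ, hδ, hδδ₀, hδO, hsep⟩ := exists_separatesAt hδ₀ hO
  refine ⟨δ, hδ, fun P hP => ?_⟩
  obtain ⟨P', hP', y, hy, huy, hsum⟩ :=
    hsep.exists_riemannSum_indicator_Iic (f := f) (G := G) (mem_of_mem_nhds (hδ.mem_nhds u)) hP
  refine ⟨P', hP'.mono hδδ₀, ?_⟩
  rw [hsum, add_zero, add_sub_cancel_left]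
  exact abs_mul_lt_of_abs_lt_div (by simpa [Real.dist_eq] using hGO ⟨hδO hy, huy⟩)

theorem exists_hasIntegral_indicator_Iio (hG : Amenable G) (hf : HasIntegral f G ⊥ ⊤ A) (u : K) :
    ∃ B, HasIntegral ((Iio u).indicator f) G ⊥ ⊤ B := by
  rcases eq_or_ne u ⊥ with rfl | hu
  · rw [Iio_bot, indicator_empty]
    exact ⟨0, hasIntegral_zero G⟩
  obtain ⟨L, hL⟩ := hG.exists_leftLimit hu
  refine exists_hasIntegral_of_approx hf u (-(f u * (G u - L))) fun ε hε δ₀ hδ₀ => ?_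
  obtain ⟨O, hO, hGO⟩ := hL _ (by positivity : 0 < ε / (|f u| + 1))
  obtain ⟨δ, hδ, hδδ₀, hδO, hsep⟩ := exists_separatesAt hδ₀ hO
  refine ⟨δ, hδ, fun P hP => ?_⟩
  obtain ⟨P', hP', v, hvu, hv, hsum⟩ :=
    hsep.exists_riemannSum_indicator_Iio (f := f) (G := G) hu hP
  refine ⟨P', hP'.mono hδδ₀, ?_⟩
  convert abs_mul_lt_of_abs_lt_div (hGO v hvu (hv.trans hδO)) using 2
  rw [hsum]
  ring

theorem exists_hasIntegral_indicator_of_isLowerSet (hG : Amenable G)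
    (hf : HasIntegral f G ⊥ ⊤ A) {L : Set K} (hL : IsLowerSet L) :
    ∃ B, HasIntegral (L.indicator f) G ⊥ ⊤ B := by
  obtain ⟨d, rfl | rfl⟩ := hL.exists_eq_Iic_or_eq_Iio
  · exact exists_hasIntegral_indicator_Iic (hG.1 d) hf
  · exact exists_hasIntegral_indicator_Iio hG hf d

end Indicator

theorem indicator_integrable_general {K : Type*} [LinearOrder K] [TopologicalSpace K] [OrderTopology K]
    [CompactSpace K] [BoundedOrder K] (G f : K → ℝ) (hG : Amenable G)
    (A : ℝ) (hf : HasIntegral f G (⊥ : K) ⊤ A)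
    (I : Set K) (hI : I.OrdConnected) :
    ∃ B, HasIntegral (I.indicator f) G (⊥ : K) ⊤ B := by
  have hI' : I = (lowerClosure I : Set K) \ (lowerClosure I \ upperClosure I) := by
    rw [sdiff_sdiff_right_self, inter_comm, hI.upperClosure_inter_lowerClosure]
  obtain ⟨B₁, h₁⟩ := exists_hasIntegral_indicator_of_isLowerSet hG hf (lowerClosure I).lower
  obtain ⟨B₂, h₂⟩ := exists_hasIntegral_indicator_of_isLowerSet hG hf
    ((lowerClosure I).lower.inter (upperClosure I).upper.compl)
  rw [hI', indicator_sdiff sdiff_subset]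
  exact ⟨B₁ - B₂, h₁.sub h₂⟩

theorem indicator_integrable {K : Type*} [LinearOrder K] [TopologicalSpace K] [OrderTopology K]
    [CompactSpace K] [BoundedOrder K] (G f : K → ℝ) (hG : Amenable G)
    (A : ℝ) (hf : HasIntegral f G (⊥ : K) ⊤ A)
    (I : Set K) (hI : I.OrdConnected) (hne : I.Nonempty) :
    ∃ B, HasIntegral (I.indicator f) G (⊥ : K) ⊤ B :=
  indicator_integrable_general G f hG A hf I hI
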